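/- With $V_\epsilon(x) = \psi(x)(\epsilon+|x|^2)^{-(n-2s)/2}$ as above and $n > 4s$, as $\epsilon \to 0$: $\int_\Omega |V_\epsilon|^2\,dx = \frac{L_3}{\epsilon^{(n-4s)/2}} + O(1)$ where $L_3 = \int_{\mathbb{R}^n}(1+|y|^2)^{-(n-2s)}\,dy$. -/

import Mathlib

open MeasureTheory Real Set Filter

noncomputable def fracS (n : ℕ) (s : ℝ) : ℝ :=
  2 ^ (2 * s) * π ^ s * (Gamma (((n : ℝ) + 2 * s) / 2) / Gamma (((n : ℝ) - 2 * s) / 2)) *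
    (Gamma ((n : ℝ) / 2) / Gamma (n : ℝ)) ^ (2 * s / (n : ℝ))

noncomputable def cns (n : ℕ) (s : ℝ) : ℝ :=
  if h : 0 < n then
    (∫ θ : EuclideanSpace ℝ (Fin n),
      (1 - Real.cos (θ ⟨0, h⟩)) / ‖θ‖ ^ ((n : ℝ) + 2 * s))⁻¹
  else 0

/-- The cross-shaped set `T(Ω) = ℝ²ⁿ \ (ℝⁿ \ Ω)²`. -/
def crossSet (n : ℕ) (Ω : Set (EuclideanSpace ℝ (Fin n))) :
    Set (EuclideanSpace ℝ (Fin n) × EuclideanSpace ℝ (Fin n)) :=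
  {p | p.1 ∈ Ω ∨ p.2 ∈ Ω}

/-- Gagliardo-type energy over the cross-shaped set `T(Ω)`. -/
noncomputable def gagliardo (n : ℕ) (s : ℝ) (Ω : Set (EuclideanSpace ℝ (Fin n)))
    (u : EuclideanSpace ℝ (Fin n) → ℝ) : ℝ :=
  ∫ p in crossSet n Ω, |u p.1 - u p.2| ^ 2 / ‖p.1 - p.2‖ ^ ((n : ℝ) + 2 * s)

/-- Membership in the nonlocal Neumann energy space `H^s_Ω`. -/
def memHs (n : ℕ) (s : ℝ) (Ω : Set (EuclideanSpace ℝ (Fin n)))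
    (u : EuclideanSpace ℝ (Fin n) → ℝ) : Prop :=
  Measurable u ∧ IntegrableOn (fun x => u x ^ 2) Ω ∧
    IntegrableOn (fun p => |u p.1 - u p.2| ^ 2 / ‖p.1 - p.2‖ ^ ((n : ℝ) + 2 * s))
      (crossSet n Ω)

/-- The Rayleigh quotient `K_λ`. -/
noncomputable def rayleigh (n : ℕ) (s lam p : ℝ) (Ω : Set (EuclideanSpace ℝ (Fin n)))
    (u : EuclideanSpace ℝ (Fin n) → ℝ) : ℝ :=
  (cns n s / 2 * gagliardo n s Ω u + lam * ∫ x in Ω, (u x) ^ 2) /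
    (∫ x in Ω, |u x| ^ (p + 1)) ^ (2 / (p + 1))

/-- `X_λ(Ω)`, the infimum of the Rayleigh quotient over nonzero elements of `H^s_Ω`. -/
noncomputable def Xlam (n : ℕ) (s lam p : ℝ) (Ω : Set (EuclideanSpace ℝ (Fin n))) : ℝ :=
  sInf {r | ∃ u, memHs n s Ω u ∧ 0 < (∫ x in Ω, |u x| ^ (p + 1)) ∧
    r = rayleigh n s lam p Ω u}

/-- The energy functional `J_λ`. -/
noncomputable def energy (n : ℕ) (s lam p : ℝ) (Ω : Set (EuclideanSpace ℝ (Fin n)))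
    (u : EuclideanSpace ℝ (Fin n) → ℝ) : ℝ :=
  1 / 2 * (cns n s / 2 * gagliardo n s Ω u + lam * ∫ x in Ω, (u x) ^ 2) -
    1 / (p + 1) * ∫ x in Ω, |u x| ^ (p + 1)

/-- A bounded domain of class `C¹`, described by local `C¹` level sets. -/
def IsC1Domain (n : ℕ) (Ω : Set (EuclideanSpace ℝ (Fin n))) : Prop :=
  IsOpen Ω ∧ Bornology.IsBounded Ω ∧
    ∀ x ∈ frontier Ω, ∃ (f : EuclideanSpace ℝ (Fin n) → ℝ) (U : Set (EuclideanSpace ℝ (Fin n))),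
      x ∈ U ∧ IsOpen U ∧ ContDiffOn ℝ 1 f U ∧ (∀ y ∈ U, fderivWithin ℝ f U y ≠ 0) ∧
      Ω ∩ U = {y ∈ U | f y < 0}

/-- The open upper half-space `E = {x : xₙ > 0}`. -/
def halfSpace (n : ℕ) (hn : 0 < n) : Set (EuclideanSpace ℝ (Fin n)) :=
  {x | 0 < x ⟨n - 1, by omega⟩}

/-- Reflection across the hyperplane `{xₙ = 0}`. -/
noncomputable def reflectLast (n : ℕ) (hn : 0 < n) (x : EuclideanSpace ℝ (Fin n)) :
    EuclideanSpace ℝ (Fin n) :=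
  WithLp.toLp 2 (Function.update x ⟨n - 1, by omega⟩ (-(x ⟨n - 1, by omega⟩)))
set_option maxHeartbeats 1000000 in
/-- Asymptotics of the `L²` norm of the truncated bubbles when `n > 4s`. -/
theorem stmt_9 (n : ℕ) (s : ℝ) (hs : s ∈ Set.Ioo (0 : ℝ) 1) (hn : 4 * s < (n : ℝ))
    (R : ℝ) (hR : 0 < R)
    (Ω : Set (EuclideanSpace ℝ (Fin n))) (hΩ : IsC1Domain n Ω)
    (hball : Metric.ball (0 : EuclideanSpace ℝ (Fin n)) (R / 2) ⊆ Ω)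
    (ψ : EuclideanSpace ℝ (Fin n) → ℝ) (hψsm : ContDiff ℝ (⊤ : ℕ∞) ψ) (hψ0 : ∀ x, 0 ≤ ψ x)
    (hψrad : ∀ x y : EuclideanSpace ℝ (Fin n), ‖x‖ = ‖y‖ → ψ x = ψ y)
    (hψsupp : Function.support ψ ⊆ Metric.ball 0 (R / 2))
    (hψ1 : ∀ x : EuclideanSpace ℝ (Fin n), ‖x‖ ≤ R / 4 → ψ x = 1)
    (V : ℝ → EuclideanSpace ℝ (Fin n) → ℝ)
    (hV : ∀ ε x, V ε x = ψ x * (ε + ‖x‖ ^ 2) ^ (-(((n : ℝ) - 2 * s) / 2)))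
    (L₃ : ℝ)
    (hL₃ : L₃ = ∫ y : EuclideanSpace ℝ (Fin n), (1 + ‖y‖ ^ 2) ^ (-((n : ℝ) - 2 * s))) :
    ∃ C > (0 : ℝ), ∃ ε₀ > (0 : ℝ), ∀ ε : ℝ, 0 < ε → ε < ε₀ →
      |(∫ x in Ω, (V ε x) ^ 2) - L₃ / ε ^ (((n : ℝ) - 4 * s) / 2)| ≤ C := by
  have hs0 : 0 < s := hs.1
  set p : ℝ := (n : ℝ) - 2 * s with hpdef
  have hp0 : 0 < p := by simp only [hpdef]; nlinarith
  have hfr : (Module.finrank ℝ (EuclideanSpace ℝ (Fin n)) : ℝ) < 2 * p := by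
    rw [finrank_euclideanSpace_fin]
    simp only [hpdef]; nlinarith
  -- the reference integrand
  set g : EuclideanSpace ℝ (Fin n) → ℝ := fun y => (1 + ‖y‖ ^ 2) ^ (-p) with hgdef
  have hg_nonneg : ∀ y, 0 ≤ g y := fun y => Real.rpow_nonneg (by positivity) _
  have hg_int : Integrable g := by
    have h := integrable_rpow_neg_one_add_norm_sq (μ := (volume : Measure (EuclideanSpace ℝ (Fin n)))) hfr
    have : (fun x : EuclideanSpace ℝ (Fin n) => ((1 : ℝ) + ‖x‖ ^ 2) ^ (-(2 * p) / 2)) = g := by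
      funext x; rw [hgdef]; ring_nf
    rwa [this] at h
  set G : ℝ := ∫ y, g y with hGdef
  have hG_nonneg : 0 ≤ G := integral_nonneg hg_nonneg
  have hL₃G : L₃ = G := by rw [hL₃, hGdef]
  -- a bound on ψ
  have hψcpt : HasCompactSupport ψ := by
    apply HasCompactSupport.of_support_subset_isCompact (isCompact_closedBall (0 : EuclideanSpace ℝ (Fin n)) (R / 2))
    exact hψsupp.trans Metric.ball_subset_closedBall
  obtain ⟨M, hM⟩ := hψcpt.exists_bound_of_continuous hψsm.continuous
  have hM1 : 1 ≤ M := by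
    have := hM 0
    rw [hψ1 0 (by simp; positivity)] at this
    simpa using this
  -- the constant c₀
  set c₀ : ℝ := (R / 4) ^ 2 / (1 + (R / 4) ^ 2) with hc₀def
  have hc₀ : 0 < c₀ := by positivity
  -- the uniform pointwise bound for the error integrand
  set B : EuclideanSpace ℝ (Fin n) → ℝ := fun x => (M ^ 2 + 1) * c₀ ^ (-p) * g x with hBdef
  have hB_int : Integrable B := (hg_int.const_mul _)
  have hC0 : 0 ≤ (M ^ 2 + 1) * c₀ ^ (-p) * G :=
    mul_nonneg (mul_nonneg (by positivity) (Real.rpow_nonneg hc₀.le _)) hG_nonneg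
  have hB_nonneg : ∀ x, 0 ≤ B x := fun x =>
    mul_nonneg (mul_nonneg (by positivity) (Real.rpow_nonneg hc₀.le _)) (hg_nonneg x)
  refine ⟨(M ^ 2 + 1) * c₀ ^ (-p) * G + 1, by linarith, 1, one_pos, fun ε hε hε1 => ?_⟩
  -- the scaled integrand
  set gε : EuclideanSpace ℝ (Fin n) → ℝ := fun x => (ε + ‖x‖ ^ 2) ^ (-p) with hgεdef
  have hεx : ∀ x : EuclideanSpace ℝ (Fin n), 0 < ε + ‖x‖ ^ 2 := fun x => by positivity
  have hc : (0 : ℝ) < Real.sqrt ε := Real.sqrt_pos.2 hε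
  -- pointwise scaling identity
  have hscale : gε = fun x => ε ^ (-p) * g ((Real.sqrt ε)⁻¹ • x) := by
    funext x
    have hnorm : ‖(Real.sqrt ε)⁻¹ • x‖ = (Real.sqrt ε)⁻¹ * ‖x‖ := by
      rw [norm_smul]; simp [abs_of_pos (inv_pos.2 hc)]
    rw [hgεdef, hgdef]
    simp only []
    rw [hnorm]
    have h1 : 1 + ((Real.sqrt ε)⁻¹ * ‖x‖) ^ 2 = ε⁻¹ * (ε + ‖x‖ ^ 2) := by
      rw [mul_pow, inv_pow, Real.sq_sqrt hε.le, mul_add, inv_mul_cancel₀ hε.ne']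
    rw [h1, Real.mul_rpow (by positivity) (hεx x).le]
    have h2 : ε⁻¹ ^ (-p) = ε ^ p := by
      rw [← Real.rpow_neg_one ε, ← Real.rpow_mul hε.le]; norm_num
    rw [h2, ← mul_assoc, ← Real.rpow_add hε]
    simp
  have hgε_int : Integrable gε := by
    rw [hscale]
    exact (hg_int.comp_smul (inv_ne_zero hc.ne')).const_mul _
  have hgε_nonneg : ∀ x, 0 ≤ gε x := fun x => Real.rpow_nonneg (hεx x).le _
  -- value of the full-space integral of gε
  have hInt_gε : ∫ x, gε x = L₃ / ε ^ (((n : ℝ) - 4 * s) / 2) := by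
    rw [hscale, integral_const_mul,
      Measure.integral_comp_inv_smul_of_nonneg (volume : Measure (EuclideanSpace ℝ (Fin n))) g hc.le,
      finrank_euclideanSpace_fin]
    rw [smul_eq_mul, Real.sqrt_eq_rpow, ← Real.rpow_natCast (ε ^ ((1:ℝ)/2)) n,
      ← Real.rpow_mul hε.le, ← hGdef, ← hL₃G]
    rw [← mul_assoc, ← Real.rpow_add hε]
    rw [show (-p + 1 / 2 * (n:ℝ)) = -(((n:ℝ) - 4 * s) / 2) from by rw [hpdef]; ring,
      Real.rpow_neg hε.le, inv_mul_eq_div]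
  -- the squared bubble
  have hVsq : ∀ x, (V ε x) ^ 2 = ψ x ^ 2 * gε x := by
    intro x
    rw [hV, mul_pow, hgεdef]
    congr 1
    rw [← Real.rpow_natCast ((ε + ‖x‖ ^ 2) ^ (-(p / 2))) 2,
      ← Real.rpow_mul (hεx x).le]
    congr 1
    push_cast; ring
  have hψg_int : Integrable (fun x => ψ x ^ 2 * gε x) := by
    refine hgε_int.bdd_mul (c := M ^ 2) ?_ (Filter.Eventually.of_forall fun x => ?_)
    · exact ((hψsm.continuous.pow 2).aestronglyMeasurable)
    · have := hM x
      rw [Real.norm_eq_abs, abs_pow, sq_abs]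
      calc ψ x ^ 2 = |ψ x| ^ 2 := (sq_abs _).symm
        _ ≤ M ^ 2 := by
            have h0 : (0:ℝ) ≤ |ψ x| := abs_nonneg _
            have := hM x
            rw [Real.norm_eq_abs] at this
            nlinarith
  -- reduce the set integral to a full-space integral
  have hset : ∫ x in Ω, (V ε x) ^ 2 = ∫ x, ψ x ^ 2 * gε x := by
    simp only [hVsq]
    apply setIntegral_eq_integral_of_forall_compl_eq_zero
    intro x hx
    have hxψ : ψ x = 0 := by
      by_contra h
      exact hx (hball (hψsupp h))
    simp [hxψ]
  -- the error term
  have herr : (∫ x in Ω, (V ε x) ^ 2) - L₃ / ε ^ (((n : ℝ) - 4 * s) / 2)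
      = ∫ x, (ψ x ^ 2 - 1) * gε x := by
    rw [hset, ← hInt_gε, ← integral_sub hψg_int hgε_int]
    congr 1; funext x; ring
  rw [herr]
  -- pointwise bound
  have hpt : ∀ x, |(ψ x ^ 2 - 1) * gε x| ≤ B x := by
    intro x
    rcases le_or_gt ‖x‖ (R / 4) with hx | hx
    · rw [hψ1 x hx]
      simp only [one_pow, sub_self, zero_mul, abs_zero]
      exact hB_nonneg x
    · rw [abs_mul, abs_of_nonneg (hgε_nonneg x), hBdef]
      simp only [hgεdef, hgdef]
      have h1 : |ψ x ^ 2 - 1| ≤ M ^ 2 + 1 := by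
        rw [abs_sub_le_iff]
        constructor
        · have := hM x; rw [Real.norm_eq_abs] at this
          have h2 : ψ x ^ 2 ≤ M ^ 2 := by nlinarith [abs_nonneg (ψ x), sq_abs (ψ x)]
          nlinarith
        · nlinarith [sq_nonneg (ψ x), sq_nonneg M]
      have h2 : gε x ≤ c₀ ^ (-p) * g x := by
        have hx0 : (0:ℝ) < ‖x‖ := lt_trans (by positivity) hx
        have step1 : gε x ≤ (‖x‖ ^ 2) ^ (-p) := by
          apply Real.rpow_le_rpow_of_nonpos (by positivity) (by nlinarith) (by linarith)
        have step2 : (‖x‖ ^ 2 : ℝ) ^ (-p) ≤ (c₀ * (1 + ‖x‖ ^ 2)) ^ (-p) := by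
          apply Real.rpow_le_rpow_of_nonpos (by positivity) ?_ (by linarith)
          rw [hc₀def]
          rw [div_mul_eq_mul_div, div_le_iff₀ (by positivity)]
          nlinarith
        calc gε x ≤ (‖x‖ ^ 2) ^ (-p) := step1
          _ ≤ (c₀ * (1 + ‖x‖ ^ 2)) ^ (-p) := step2
          _ = c₀ ^ (-p) * g x := by
              rw [Real.mul_rpow hc₀.le (by positivity), hgdef]
      calc |ψ x ^ 2 - 1| * gε x ≤ (M ^ 2 + 1) * gε x :=
            mul_le_mul_of_nonneg_right h1 (hgε_nonneg x)
        _ ≤ (M ^ 2 + 1) * (c₀ ^ (-p) * g x) := by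
            apply mul_le_mul_of_nonneg_left h2 (by positivity)
        _ = (M ^ 2 + 1) * c₀ ^ (-p) * g x := by ring
  have herr_int : Integrable (fun x => (ψ x ^ 2 - 1) * gε x) := by
    have : (fun x => (ψ x ^ 2 - 1) * gε x) = fun x => ψ x ^ 2 * gε x - gε x := by
      funext x; ring
    rw [this]
    exact hψg_int.sub hgε_int
  have habs : |∫ x, (ψ x ^ 2 - 1) * gε x| ≤ ∫ x, |(ψ x ^ 2 - 1) * gε x| := by
    exact
      norm_integral_le_integral_norm (μ := volume) (fun x => (ψ x ^ 2 - 1) * gε x)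
  calc |∫ x, (ψ x ^ 2 - 1) * gε x| ≤ ∫ x, |(ψ x ^ 2 - 1) * gε x| := habs
    _ ≤ ∫ x, B x := integral_mono herr_int.abs hB_int hpt
    _ = (M ^ 2 + 1) * c₀ ^ (-p) * G := by rw [hBdef, integral_const_mul, hGdef]
    _ ≤ (M ^ 2 + 1) * c₀ ^ (-p) * G + 1 := by linarith
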